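/- Let θ = (θ_g, X_g)_{g∈G} be a topological partial action of a topological group G on a compact Hausdorff space X, with enveloping space X_G, and let F(X)_G be the enveloping space of the induced partial action on the hyperspace F(X) of nonempty finite subsets of X. Then F(X)_G is a T1 space if and only if X_G is a T1 space. -/

import Mathlib

/-- The hyperspace `2^X` of nonempty compact subsets of `X`. -/
structure NCompact (X : Type*) [TopologicalSpace X] where
  carrier : Set X
  isCompact' : IsCompact carrier
  nonempty' : carrier.Nonempty

/-- The Vietoris topology on the hyperspace `2^X`, generated by the subbasic open sets
`{A | A ⊆ U}` and `{A | A ∩ U ≠ ∅}` for `U` open in `X`. -/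
instance NCompact.instTopologicalSpace (X : Type*) [TopologicalSpace X] :
    TopologicalSpace (NCompact X) :=
  TopologicalSpace.generateFrom
    {S | ∃ U : Set X, IsOpen U ∧
      (S = {A : NCompact X | A.carrier ⊆ U} ∨ S = {A : NCompact X | (A.carrier ∩ U).Nonempty})}

/-- A topological partial action `θ = (θ_g, X_g)_{g ∈ G}` of a topological group `G` on a
topological space `X`: a family of open sets `dom g = X_g` and maps `map g = θ_g` which
restrict to homeomorphisms `θ_g : X_{g⁻¹} → X_g` (with inverse `θ_{g⁻¹}`), such that
`X_1 = X`, `θ_1 = id`, `θ_g(X_{g⁻¹} ∩ X_h) = X_g ∩ X_{gh}` and `θ_g ∘ θ_h = θ_{gh}` on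
`X_{h⁻¹} ∩ X_{(gh)⁻¹}`.  (The values of `map g` outside `dom g⁻¹` are irrelevant junk.) -/
structure TopPartialAction (G : Type*) (X : Type*) [Group G] [TopologicalSpace G]
    [TopologicalSpace X] where
  dom : G → Set X
  map : G → X → X
  isOpen_dom : ∀ g, IsOpen (dom g)
  dom_one : dom 1 = Set.univ
  map_one : ∀ x, map 1 x = x
  image_dom : ∀ g, map g '' dom g⁻¹ = dom g
  map_inv : ∀ g, ∀ x ∈ dom g⁻¹, map g⁻¹ (map g x) = x
  image_inter : ∀ g h, map g '' (dom g⁻¹ ∩ dom h) = dom g ∩ dom (g * h)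
  map_mul : ∀ g h, ∀ x ∈ dom h⁻¹ ∩ dom (g * h)⁻¹, map g (map h x) = map (g * h) x
  continuousOn_map : ∀ g, ContinuousOn (map g) (dom g⁻¹)

variable {G X : Type*} [Group G] [TopologicalSpace G] [TopologicalSpace X]

/-- The equivalence relation `R` on `G × X` defining the enveloping space `X_G = (G × X)/R`:
`(g,x) R (h,y)` iff `x ∈ X_{g⁻¹h}` and `θ_{h⁻¹g}(x) = y`. -/
def envRel (θ : TopPartialAction G X) (p q : G × X) : Prop :=
  p.2 ∈ θ.dom (p.1⁻¹ * q.1) ∧ θ.map (q.1⁻¹ * p.1) p.2 = q.2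

/-- The relation `2^R` on `G × 2^X` defining the enveloping space `(2^X)_G` of the induced
partial action `2^θ`: `(g,A) 2^R (h,B)` iff `A ⊆ X_{g⁻¹h}` and `θ_{h⁻¹g}(A) = B`. -/
def envRelH (θ : TopPartialAction G X) (p q : G × NCompact X) : Prop :=
  p.2.carrier ⊆ θ.dom (p.1⁻¹ * q.1) ∧ θ.map (q.1⁻¹ * p.1) '' p.2.carrier = q.2.carrier

/-- The hyperspace `F(X)` of nonempty finite subsets of `X`, with the subspace topology
inherited from the Vietoris topology on `2^X`. -/
def FinHyper (X : Type*) [TopologicalSpace X] : Type _ :=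
  {A : NCompact X // A.carrier.Finite}

instance (X : Type*) [TopologicalSpace X] : TopologicalSpace (FinHyper X) :=
  instTopologicalSpaceSubtype

/-- The relation `2^R` on `G × F(X)` defining the enveloping space `F(X)_G` of the induced
partial action on `F(X)`: `(g,A) 2^R (h,B)` iff `A ⊆ X_{g⁻¹h}` and `θ_{h⁻¹g}(A) = B`. -/
def envRelF (θ : TopPartialAction G X) (p q : G × FinHyper X) : Prop :=
  p.2.1.carrier ⊆ θ.dom (p.1⁻¹ * q.1) ∧ θ.map (q.1⁻¹ * p.1) '' p.2.1.carrier = q.2.1.carrier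

/-!
A quotient of a space by an equivalence relation is `T1` exactly when every equivalence class
is closed upstairs. The singleton map `x ↦ {x}` is continuous and pulls the class of `(g, {x})`
back to the class of `(g, x)`. Conversely the class of `(g, A)` consists of the `(h, B)` such
that every point of `B` is `R`-related to a point of `A` and every point of `A` to a point of
`B`; in the Vietoris topology the first condition is closed because `⋃ x ∈ A, [(g, x)]` is
closed (`A` being finite), and the second because each `[(g, x)]` is closed and the sets `B` are
compact.
-/

theorem t1Space_quot_iff {α : Type*} [TopologicalSpace α] {r : α → α → Prop}
    (hr : Equivalence r) : T1Space (Quot r) ↔ ∀ a, IsClosed {b | r a b} := by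
  have hclass : ∀ a, Quot.mk r ⁻¹' {Quot.mk r a} = {b | r a b} := fun a =>
    Set.ext fun _ => (Quot.eq.trans hr.eqvGen_iff).trans ⟨hr.symm, hr.symm⟩
  refine ⟨fun _ a => hclass a ▸ isClosed_singleton.preimage continuous_quot_mk,
    fun h => ⟨Quot.ind fun a => ?_⟩⟩
  rw [← isQuotientMap_quot_mk.isClosed_preimage, hclass]
  exact h a

namespace NCompact

variable {Y : Type*} [TopologicalSpace Y]

theorem isOpen_setOf_subset {U : Set X} (hU : IsOpen U) :
    IsOpen {A : NCompact X | A.carrier ⊆ U} :=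
  TopologicalSpace.isOpen_generateFrom_of_mem ⟨U, hU, Or.inl rfl⟩

theorem isOpen_setOf_inter_nonempty {U : Set X} (hU : IsOpen U) :
    IsOpen {A : NCompact X | (A.carrier ∩ U).Nonempty} :=
  TopologicalSpace.isOpen_generateFrom_of_mem ⟨U, hU, Or.inr rfl⟩

theorem isOpen_setOf_exists_mem {W : Set (Y × X)} (hW : IsOpen W) :
    IsOpen {p : Y × NCompact X | ∃ x ∈ p.2.carrier, (p.1, x) ∈ W} := by
  refine isOpen_iff_forall_mem_open.mpr ?_
  rintro ⟨y, A⟩ ⟨x, hx, hyx⟩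
  obtain ⟨u, v, hu, hv, hyu, hxv, huv⟩ := isOpen_prod_iff.mp hW y x hyx
  refine ⟨u ×ˢ {B : NCompact X | (B.carrier ∩ v).Nonempty}, ?_,
    hu.prod (isOpen_setOf_inter_nonempty hv), hyu, x, hx, hxv⟩
  rintro ⟨y', B⟩ ⟨hy', x', hx', hx'v⟩
  exact ⟨x', hx', huv ⟨hy', hx'v⟩⟩

theorem isOpen_setOf_forall_mem {W : Set (Y × X)} (hW : IsOpen W) :
    IsOpen {p : Y × NCompact X | ∀ x ∈ p.2.carrier, (p.1, x) ∈ W} := by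
  refine isOpen_iff_forall_mem_open.mpr ?_
  rintro ⟨y, A⟩ hA
  obtain ⟨u, v, hu, hv, hyu, hAv, huv⟩ := generalized_tube_lemma isCompact_singleton
    A.isCompact' hW (by rintro ⟨_, x⟩ ⟨rfl, hx⟩; exact hA x hx)
  refine ⟨u ×ˢ {B : NCompact X | B.carrier ⊆ v}, ?_, hu.prod (isOpen_setOf_subset hv),
    hyu rfl, hAv⟩
  rintro ⟨y', B⟩ ⟨hy', hBv⟩ x hx
  exact huv ⟨hy', hBv hx⟩

theorem isClosed_setOf_forall_mem {K : Set (Y × X)} (hK : IsClosed K) :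
    IsClosed {p : Y × NCompact X | ∀ x ∈ p.2.carrier, (p.1, x) ∈ K} := by
  simpa [← isOpen_compl_iff, Set.compl_ofPred] using isOpen_setOf_exists_mem hK.isOpen_compl

theorem isClosed_setOf_exists_mem {K : Set (Y × X)} (hK : IsClosed K) :
    IsClosed {p : Y × NCompact X | ∃ x ∈ p.2.carrier, (p.1, x) ∈ K} := by
  simpa [← isOpen_compl_iff, Set.compl_ofPred] using isOpen_setOf_forall_mem hK.isOpen_compl

end NCompact

namespace FinHyper

def singleton (x : X) : FinHyper X :=
  ⟨⟨{x}, isCompact_singleton, Set.singleton_nonempty x⟩, Set.finite_singleton x⟩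

theorem continuous_singleton : Continuous (singleton : X → FinHyper X) := by
  refine Continuous.subtype_mk ?_ _
  rw [NCompact.instTopologicalSpace, continuous_generateFrom_iff]
  rintro s ⟨U, hU, rfl | rfl⟩ <;> simpa [Set.preimage, Set.singleton_subset_iff]

end FinHyper

namespace TopPartialAction

variable (θ : TopPartialAction G X) {a b : G} {x : X}

theorem map_mem_dom (hx : x ∈ θ.dom a⁻¹) : θ.map a x ∈ θ.dom a :=
  θ.image_dom a ▸ Set.mem_image_of_mem _ hx

theorem mem_dom_mul_inv (hx : x ∈ θ.dom a⁻¹) (hax : θ.map a x ∈ θ.dom b⁻¹) :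
    x ∈ θ.dom (b * a)⁻¹ := by
  have hmem : θ.map a x ∈ θ.dom a⁻¹⁻¹ ∩ θ.dom b⁻¹ := ⟨by simpa using θ.map_mem_dom hx, hax⟩
  have h := θ.image_inter a⁻¹ b⁻¹ ▸ Set.mem_image_of_mem (θ.map a⁻¹) hmem
  rw [θ.map_inv a x hx] at h
  simpa using h.2

theorem map_map (hx : x ∈ θ.dom a⁻¹) (hax : θ.map a x ∈ θ.dom b⁻¹) :
    θ.map b (θ.map a x) = θ.map (b * a) x :=
  θ.map_mul b a x ⟨hx, θ.mem_dom_mul_inv hx hax⟩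

theorem envRel_iff {g h : G} {y : X} :
    envRel θ (g, x) (h, y) ↔ x ∈ θ.dom (h⁻¹ * g)⁻¹ ∧ θ.map (h⁻¹ * g) x = y := by
  simp [envRel]

theorem envRel_equivalence : Equivalence (envRel θ) where
  refl _ := ⟨by simp [θ.dom_one], by simp [θ.map_one]⟩
  symm {p q} := by
    obtain ⟨g, x⟩ := p; obtain ⟨h, y⟩ := q
    rw [envRel_iff, envRel_iff]
    rintro ⟨hx, rfl⟩
    refine ⟨by simpa using θ.map_mem_dom hx, ?_⟩
    simpa using θ.map_inv _ x hx
  trans {p q r} := by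
    obtain ⟨g, x⟩ := p; obtain ⟨h, y⟩ := q; obtain ⟨k, z⟩ := r
    rw [envRel_iff, envRel_iff, envRel_iff]
    rintro ⟨hx, rfl⟩ ⟨hy, rfl⟩
    have hgk : k⁻¹ * h * (h⁻¹ * g) = k⁻¹ * g := by group
    exact ⟨hgk ▸ θ.mem_dom_mul_inv hx hy, hgk ▸ (θ.map_map hx hy).symm⟩

theorem envRelF_iff (p q : G × FinHyper X) :
    envRelF θ p q ↔ (∀ x ∈ p.2.1.carrier, ∃ y ∈ q.2.1.carrier, envRel θ (p.1, x) (q.1, y)) ∧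
      (∀ y ∈ q.2.1.carrier, ∃ x ∈ p.2.1.carrier, envRel θ (p.1, x) (q.1, y)) := by
  obtain ⟨g, A⟩ := p; obtain ⟨h, B⟩ := q
  refine ⟨fun ⟨hsub, himg⟩ => ⟨fun x hx => ?_, fun y hy => ?_⟩, fun ⟨hA, hB⟩ => ⟨?_, ?_⟩⟩
  · exact ⟨_, himg ▸ Set.mem_image_of_mem _ hx, hsub hx, rfl⟩
  · obtain ⟨x, hx, rfl⟩ := himg ▸ hy
    exact ⟨x, hx, hsub hx, rfl⟩
  · intro x hx
    obtain ⟨y, -, hxy, -⟩ := hA x hx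
    exact hxy
  · refine Set.Subset.antisymm ?_ fun y hy => ?_
    · rintro _ ⟨x, hx, rfl⟩
      obtain ⟨y, hy, -, hxy⟩ := hA x hx
      exact hxy ▸ hy
    · obtain ⟨x, hx, -, hxy⟩ := hB y hy
      exact ⟨x, hx, hxy⟩

theorem envRelF_equivalence : Equivalence (envRelF θ) := by
  have hR := θ.envRel_equivalence
  refine ⟨fun p => ?_, fun {p q} hpq => ?_, fun {p q r} hpq hqr => ?_⟩ <;>
    simp only [envRelF_iff] at *
  · exact ⟨fun x hx => ⟨x, hx, hR.refl _⟩, fun x hx => ⟨x, hx, hR.refl _⟩⟩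
  · exact ⟨fun y hy => (hpq.2 y hy).imp fun x ⟨hx, hxy⟩ => ⟨hx, hR.symm hxy⟩,
      fun x hx => (hpq.1 x hx).imp fun y ⟨hy, hxy⟩ => ⟨hy, hR.symm hxy⟩⟩
  · refine ⟨fun x hx => ?_, fun z hz => ?_⟩
    · obtain ⟨y, hy, hxy⟩ := hpq.1 x hx
      obtain ⟨z, hz, hyz⟩ := hqr.1 y hy
      exact ⟨z, hz, hR.trans hxy hyz⟩
    · obtain ⟨y, hy, hyz⟩ := hqr.2 z hz
      obtain ⟨x, hx, hxy⟩ := hpq.2 y hy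
      exact ⟨x, hx, hR.trans hxy hyz⟩

theorem envRelF_singleton_iff {g h : G} {x y : X} :
    envRelF θ (g, .singleton x) (h, .singleton y) ↔ envRel θ (g, x) (h, y) := by
  simp [envRelF, envRel, FinHyper.singleton]

theorem isClosed_setOf_envRel_of_envRelF (hF : ∀ p, IsClosed {q | envRelF θ p q})
    (p : G × X) : IsClosed {q | envRel θ p q} := by
  obtain ⟨g, x⟩ := p
  have hpre : {q | envRel θ (g, x) q} =
      Prod.map id FinHyper.singleton ⁻¹' {q | envRelF θ (g, .singleton x) q} := by
    ext ⟨h, y⟩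
    exact θ.envRelF_singleton_iff.symm
  rw [hpre]
  exact (hF _).preimage (continuous_id.prodMap FinHyper.continuous_singleton)

theorem isClosed_setOf_envRelF_of_envRel (hR : ∀ p, IsClosed {q | envRel θ p q})
    (p : G × FinHyper X) : IsClosed {q | envRelF θ p q} := by
  have hpre : {q | envRelF θ p q} = (fun q : G × FinHyper X => (q.1, q.2.1)) ⁻¹'
      ({r | ∀ y ∈ r.2.carrier, (r.1, y) ∈ ⋃ x ∈ p.2.1.carrier, {q | envRel θ (p.1, x) q}} ∩
        ⋂ x ∈ p.2.1.carrier, {r | ∃ y ∈ r.2.carrier, (r.1, y) ∈ {q | envRel θ (p.1, x) q}}) := by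
    ext q
    simp only [Set.mem_ofPred, Set.mem_preimage, Set.mem_inter_iff, Set.mem_iInter₂,
      Set.mem_iUnion₂, envRelF_iff, exists_prop, and_comm]
  rw [hpre]
  refine .preimage (continuous_id.prodMap continuous_subtype_val) (.inter ?_ ?_)
  · exact NCompact.isClosed_setOf_forall_mem (p.2.2.isClosed_biUnion fun _ _ => hR _)
  · exact isClosed_biInter fun _ _ => NCompact.isClosed_setOf_exists_mem (hR _)

end TopPartialAction

theorem t1_envelopingSpace_finiteHyperspace_iff_general
    {G X : Type*} [Group G] [TopologicalSpace G]
    [TopologicalSpace X]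
    (θ : TopPartialAction G X) :
    T1Space (Quot (envRelF θ)) ↔ T1Space (Quot (envRel θ)) := by
  rw [t1Space_quot_iff θ.envRelF_equivalence, t1Space_quot_iff θ.envRel_equivalence]
  exact ⟨θ.isClosed_setOf_envRel_of_envRelF, θ.isClosed_setOf_envRelF_of_envRel⟩

/-- Let `θ` be a topological partial action of a topological group `G` on a compact Hausdorff
space `X`, with enveloping space `X_G`, and let `F(X)_G` be the enveloping space of the
induced partial action on the hyperspace `F(X)` of nonempty finite subsets of `X`.  Then
`F(X)_G` is `T1` if and only if `X_G` is `T1`. -/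
theorem t1_envelopingSpace_finiteHyperspace_iff
    {G X : Type*} [Group G] [TopologicalSpace G] [IsTopologicalGroup G]
    [TopologicalSpace X] [CompactSpace X] [T2Space X]
    (θ : TopPartialAction G X) :
    T1Space (Quot (envRelF θ)) ↔ T1Space (Quot (envRel θ)) :=
  t1_envelopingSpace_finiteHyperspace_iff_general θ
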